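/- arXiv:2209.12813 — 3 statements merged into one kernel-verified Lean document; each statement's English description precedes it below -/
import Mathlib

section
/- Let ω be a balanced metric on a compact complex n-dimensional manifold X, i.e. ∂̄ω_{n-1} = 0 where ω_{n-1} = ω^{n-1}/(n-1)!. Then ω is Kähler if and only if the L²_ω-orthogonal projection of ω_{n-1} onto Im ∂̄ (in the three-space decomposition of (n-1,n-1)-forms associated to Δ''_ω) vanishes. -/
/-!
STATEMENT 5 (abstract Hodge-theoretic setting).
`W` models the smooth `(n-1,n-1)`-forms with the `L²_ω` inner product, `V` the
`(n-1,n-2)`-forms, `Wp` the `(n-1,n)`-forms, `V11` the `(1,1)`-forms and `V21` the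
`(2,1)`-forms.  `delbar1 : V → W` and `delbar2 : W → Wp` are `∂̄`, `delbarstar = ∂̄^⋆_ω`,
`H = ker Δ''_ω` in bidegree `(n-1,n-1)` and `P = P^{(n-1,n-1)}_{ω_{n-1}}` the projection
onto `Im ∂̄` from the decomposition `C^∞_{n-1,n-1} = ker Δ'' ⊕ Im ∂̄ ⊕ Im ∂̄^⋆`.
`Ω` represents `ω_{n-1} = ω^{n-1}/(n-1)!`; `star21` is the Hodge star on `(2,1)`-forms
(an isomorphism), and `hkey` is the identity `∂̄^⋆_ω ω_{n-1} = -⋆_ω(∂ω)`.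
Conclusion: for a balanced metric ω, ω is Kähler (`∂ω = 0`) iff `P(ω_{n-1}) = 0`.
-/
theorem stmt_5
    (V W Wp V11 V21 : Type*)
    [NormedAddCommGroup V] [InnerProductSpace ℂ V]
    [NormedAddCommGroup W] [InnerProductSpace ℂ W]
    [NormedAddCommGroup Wp] [InnerProductSpace ℂ Wp]
    [AddCommGroup V11] [Module ℂ V11] [AddCommGroup V21] [Module ℂ V21]
    (delbar1 : V →ₗ[ℂ] W) (delbar2 : W →ₗ[ℂ] Wp) (delbarstar : W →ₗ[ℂ] V)
    (H : Submodule ℂ W) (P : W →ₗ[ℂ] W)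
    (pdel : V11 →ₗ[ℂ] V21) (star21 : V21 →ₗ[ℂ] V)
    (ω : V11) (Ω : W)
    -- the Hodge star is an isomorphism
    (hstar_inj : Function.Injective star21)
    -- ω is balanced: ∂̄ ω_{n-1} = 0
    (hbal : delbar2 Ω = 0)
    -- ker ∂̄ = ker Δ'' ⊕ Im ∂̄, with P the projection onto Im ∂̄
    (hdecomp : ∀ v : W, delbar2 v = 0 → P v ∈ LinearMap.range delbar1 ∧ v - P v ∈ H)
    -- ker Δ'' = ker ∂̄ ∩ ker ∂̄^⋆
    (hH : ∀ v ∈ H, delbar2 v = 0 ∧ delbarstar v = 0)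
    (hHmem : ∀ v : W, delbar2 v = 0 → delbarstar v = 0 → v ∈ H)
    -- ker Δ'' ∩ Im ∂̄ = {0} (orthogonality of the decomposition)
    (hdisj : ∀ v ∈ H, v ∈ LinearMap.range delbar1 → v = 0)
    -- ∂̄^⋆_ω ω_{n-1} = -⋆_ω ∂ (⋆_ω ω_{n-1}) = -⋆_ω (∂ω)
    (hkey : delbarstar Ω = - star21 (pdel ω)) :
    pdel ω = 0 ↔ P Ω = 0 := by

  obtain ⟨hr, hh⟩ := hdecomp Ω hbal
  constructor
  · intro h0
    have hds : delbarstar Ω = 0 := by rw [hkey, h0, map_zero, neg_zero]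
    have hΩH : Ω ∈ H := hHmem Ω hbal hds
    have : P Ω ∈ H := by
      have := H.sub_mem hΩH hh
      simpa using this
    exact hdisj _ this hr
  · intro h0
    have hΩH : Ω ∈ H := by simpa [h0] using hh
    have hds := (hH Ω hΩH).2
    rw [hkey] at hds
    exact hstar_inj (by simpa using neg_eq_zero.mp hds)
end

section
/- Let ω be a Hermitian metric and Ω a real (n-1,n-1)-form on a compact complex n-manifold. For t small, let γ_t be the unique positive definite (1,1)-form with (γ_t)_{n-1} = ω_{n-1} + tΩ (the Michelsohn (n-1)-st root). Then the derivative ρ := dγ_t/dt|_{t=0} is given by ρ = (1/(n-1)) Λ_ω(⋆_ω Ω) ω − ⋆_ω Ω. -/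
/-! All factors equal `1` at `t = 0`, so the product rule reduces the derivative of the numerator
to `Σ_k Ω_k / (n - 1)`, and the quotient rule then subtracts the derivative `Ω_j` of the
denominator. -/

open Finset

lemma hasDerivAt_one_add_mul_zero (a : ℝ) : HasDerivAt (fun t : ℝ => 1 + t * a) a 0 := by
  simpa using ((hasDerivAt_id (0 : ℝ)).mul_const a).const_add 1

lemma hasDerivAt_one_add_mul_rpow_zero (a p : ℝ) :
    HasDerivAt (fun t : ℝ => (1 + t * a) ^ p) (p * a) 0 := by
  simpa [mul_comm] using (hasDerivAt_one_add_mul_zero a).rpow_const (p := p) (by norm_num)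

theorem stmt_17_general (n : ℕ) (Ω : Fin n → ℝ) (j : Fin n) :
    HasDerivAt
      (fun t : ℝ => (∏ k, (1 + t * Ω k) ^ (((n : ℝ) - 1)⁻¹)) / (1 + t * Ω j))
      ((∑ k, Ω k) / ((n : ℝ) - 1) - Ω j) 0 := by
  set p : ℝ := ((n : ℝ) - 1)⁻¹
  have hnum : HasDerivAt (fun t : ℝ => ∏ k, (1 + t * Ω k) ^ p) (∑ k, p * Ω k) 0 := by
    simpa using HasDerivAt.fun_finsetProd (u := univ) fun k _ =>
      hasDerivAt_one_add_mul_rpow_zero (Ω k) p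
  have hquot := hnum.fun_div (hasDerivAt_one_add_mul_zero (Ω j)) (by simp)
  refine hquot.congr_deriv ?_
  simp [p, sum_mul, div_eq_mul_inv, mul_comm]

theorem stmt_17 (n : ℕ) (hn : 2 ≤ n) (Ω : Fin n → ℝ) (j : Fin n) :
    HasDerivAt
      (fun t : ℝ => (∏ k, (1 + t * Ω k) ^ (((n : ℝ) - 1)⁻¹)) / (1 + t * Ω j))
      ((∑ k, Ω k) / ((n : ℝ) - 1) - Ω j) 0 :=
  stmt_17_general n Ω j
end

section
/- Let X be a compact complex n-manifold with an SKT metric ω, and suppose ω is a critical point of the functional F on the cone of SKT metrics, i.e. d/dt|_{t=0} F(ω + tγ) = 0 for all real (1,1)-forms γ ∈ ker(∂∂̄). Then ω is Kähler. Conversely every Kähler metric is a critical point (indeed a minimizer with F = 0) of F. -/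
/-!
Testing a critical point in the direction `γ = ω` is Euler's identity for the
`n`-homogeneous `F`: the derivative of `t ↦ F((1 + t) ω)` at `0` is `n F(ω)`, so criticality
forces `F(ω) = 0`, i.e. `ω` is Kähler. Conversely a Kähler `ω` is a global minimum of `F ≥ 0`,
so every directional derivative there vanishes.
-/

section LineDerivative

variable {V : Type*} [AddCommGroup V] [Module ℝ V]

theorem hasDerivAt_apply_add_smul_self_of_homogeneous {F : V → ℝ} {n : ℕ}
    (hscale : ∀ l : ℝ, 0 < l → ∀ v : V, F (l • v) = l ^ n * F v) (ω : V) :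
    HasDerivAt (fun t : ℝ => F (ω + t • ω)) (n * F ω) 0 := by
  have hpow : HasDerivAt (fun t : ℝ => (1 + t) ^ n * F ω) (n * F ω) 0 := by
    simpa using (((hasDerivAt_id (0 : ℝ)).const_add 1).pow n).mul_const (F ω)
  refine hpow.congr_of_eventuallyEq ?_
  filter_upwards [Ioi_mem_nhds (show (-1 : ℝ) < 0 by norm_num)] with t ht
  rw [show ω + t • ω = (1 + t) • ω by rw [add_smul, one_smul],
    hscale _ (by linarith [Set.mem_Ioi.mp ht])]

theorem eq_zero_of_hasDerivAt_apply_add_smul_of_forall_le {F : V → ℝ} {ω γ : V} {c : ℝ}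
    (hmin : ∀ v, F ω ≤ F v) (hc : HasDerivAt (fun t : ℝ => F (ω + t • γ)) c 0) :
    c = 0 :=
  IsLocalMin.hasDerivAt_eq_zero (Filter.Eventually.of_forall fun t => by simpa using hmin _) hc

end LineDerivative

theorem stmt_19
    (V W W' : Type*) [AddCommGroup V] [Module ℝ V]
    [AddCommGroup W] [Module ℝ W] [AddCommGroup W'] [Module ℝ W']
    (n : ℕ) (hn : 1 ≤ n)
    (ddbar : V →ₗ[ℝ] W) (pdel : V →ₗ[ℝ] W')
    (F : V → ℝ)
    (hFpos : ∀ v : V, 0 ≤ F v)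
    (ω : V)
    -- ω is SKT
    (hω : ddbar ω = 0)
    -- the scaling law F(λv) = λ^n F(v)
    (hscale : ∀ l : ℝ, 0 < l → ∀ v : V, F (l • v) = l ^ n * F v)
    -- F(ω) = 0 iff ω is Kähler
    (hFK : F ω = 0 ↔ pdel ω = 0) :
    (∀ γ : V, ddbar γ = 0 →
        ∀ c : ℝ, HasDerivAt (fun t : ℝ => F (ω + t • γ)) c 0 → c = 0)
      ↔ pdel ω = 0 := by
  refine ⟨fun hcrit => hFK.mp ?_, fun hK _ _ _ => ?_⟩
  · have hEuler := hcrit ω hω _ (hasDerivAt_apply_add_smul_self_of_homogeneous hscale ω)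
    exact (mul_eq_zero.mp hEuler).resolve_left (Nat.cast_ne_zero.mpr (by omega))
  · exact eq_zero_of_hasDerivAt_apply_add_smul_of_forall_le fun v => (hFK.mpr hK).symm ▸ hFpos v
end
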